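/- Let 0 < p ≤ 1, M = 2^d, and let k ∈ {1,…,M−1} and a > 0 satisfy ka ≤ 1/(2√M) and a ≤ M^{−1/2}(k+1)^{−1/p}. Then every f ∈ F(k,a) satisfies 1/(2M) ≤ f(x) ≤ 3/(2M) for all x ∈ {0,1}^d, and F(k,a) ⊆ F^{+,1}_d(p). -/

import Mathlib

open scoped BigOperators

namespace RWT

/-- The binary hypercube `{0,1}^d`, modeled as functions `Fin d → Bool`. -/
abbrev Cube (d : ℕ) := Fin d → Bool

/-- The dot product `s · x = ∑_j s_j x_j` of two binary strings (as a natural number). -/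
def dotc {k : ℕ} (s x : Cube k) : ℕ :=
  (Finset.univ.filter fun j => s j = true ∧ x j = true).card

/-- The Walsh function `χ_s(x) = 2^{-k/2} (-1)^{s·x}` on `{0,1}^k`. -/
noncomputable def walsh {k : ℕ} (s x : Cube k) : ℝ :=
  (-1 : ℝ) ^ dotc s x / Real.sqrt (2 ^ k)

/-- The inner product `⟨f,g⟩ = ∑_x f(x) g(x)` of `L²(μ_k)` (counting measure). -/
noncomputable def ip {k : ℕ} (f g : Cube k → ℝ) : ℝ := ∑ x : Cube k, f x * g x

/-- The Fourier–Walsh coefficient `θ_s = ⟨f, χ_s⟩`. -/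
noncomputable def theta {d : ℕ} (f : Cube d → ℝ) (s : Cube d) : ℝ := ip f (walsh s)

/-- The prefix map `π_k : {0,1}^d → {0,1}^k`. -/
def pref {d : ℕ} (k : ℕ) (h : k ≤ d) (x : Cube d) : Cube k :=
  fun j => x (Fin.castLE h j)

/-- The suffix map `σ_k : {0,1}^d → {0,1}^{d-k}`. -/
def suff {d : ℕ} (k : ℕ) (h : k ≤ d) (x : Cube d) : Cube (d - k) :=
  fun j => x ⟨k + j.val, by have := j.isLt; omega⟩

/-- Concatenation of `u ∈ {0,1}^k` and `v ∈ {0,1}^{d-k}` into a string in `{0,1}^d`. -/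
def concat {d k : ℕ} (h : k ≤ d) (u : Cube k) (v : Cube (d - k)) : Cube d :=
  fun i => if hi : i.val < k then u ⟨i.val, hi⟩ else v ⟨i.val - k, by have := i.isLt; omega⟩

/-- `f` is a probability density on `{0,1}^d` w.r.t. the counting measure. -/
def IsDensity {d : ℕ} (f : Cube d → ℝ) : Prop :=
  (∀ x, 0 ≤ f x) ∧ ∑ x : Cube d, f x = 1

/-- Membership of the coefficient vector `θ` in the weak-`ℓ^p` ball of radius `R`:
the decreasing rearrangement of `|θ|` satisfies `|θ_{(m)}| ≤ R m^{-1/p}` for `1 ≤ m ≤ 2^d`. -/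
def wlp (d : ℕ) (p R : ℝ) (θ : Cube d → ℝ) : Prop :=
  ∃ e : Fin (2 ^ d) ≃ Cube d,
    (∀ i j : Fin (2 ^ d), i ≤ j → |θ (e j)| ≤ |θ (e i)|) ∧
    ∀ m : Fin (2 ^ d), |θ (e m)| ≤ R * ((m.val : ℝ) + 1) ^ (-(1 / p))

/-- The sparsity class `F_d(p) = {f : θ(f) ∈ wℓ^p(1/√M)}`, `M = 2^d`. -/
def Fclass (d : ℕ) (p : ℝ) : Set (Cube d → ℝ) :=
  {f | wlp d p (1 / Real.sqrt (2 ^ d)) (theta f)}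

/-- The class `F^{+,1}_d(p)` of probability densities in `F_d(p)`. -/
def FclassDens (d : ℕ) (p : ℝ) : Set (Cube d → ℝ) :=
  {f | f ∈ Fclass d p ∧ IsDensity f}

/-- Empirical Fourier–Walsh coefficient `θ̂_s = (1/n) ∑_i χ_s(x_i)`. -/
noncomputable def thetaHat {d n : ℕ} (xs : Fin n → Cube d) (s : Cube d) : ℝ :=
  (1 / (n : ℝ)) * ∑ i, walsh s (xs i)

/-- The weight estimate
`Ŵ_u = (1/n²) ∑_i ∑_j χ_u(π_k(x_i)) χ_u(π_k(x_j)) 1{σ_k(x_i) = σ_k(x_j)}`. -/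
noncomputable def What {d : ℕ} (k : ℕ) (h : k ≤ d) {n : ℕ} (xs : Fin n → Cube d)
    (u : Cube k) : ℝ :=
  (1 / (n : ℝ) ^ 2) * ∑ i, ∑ j,
    walsh u (pref k h (xs i)) * walsh u (pref k h (xs j)) *
      (if suff k h (xs i) = suff k h (xs j) then (1 : ℝ) else 0)

/-- `f_u = ∑_{v ∈ {0,1}^{d-k}} θ_{uv} χ_v ∈ L²(μ_{d-k})`. -/
noncomputable def fu {d : ℕ} (k : ℕ) (h : k ≤ d) (f : Cube d → ℝ) (u : Cube k) :
    Cube (d - k) → ℝ :=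
  fun y => ∑ v : Cube (d - k), theta f (concat h u v) * walsh v y

/-- The empirical counterpart `f̂_u = ∑_v θ̂_{uv} χ_v`. -/
noncomputable def fuHat {d n : ℕ} (k : ℕ) (h : k ≤ d) (xs : Fin n → Cube d) (u : Cube k) :
    Cube (d - k) → ℝ :=
  fun y => ∑ v : Cube (d - k), thetaHat xs (concat h u v) * walsh v y

/-- The weight `W_u = ∑_v θ_{uv}²`. -/
noncomputable def Wu {d : ℕ} (k : ℕ) (h : k ≤ d) (f : Cube d → ℝ) (u : Cube k) : ℝ :=
  ∑ v : Cube (d - k), (theta f (concat h u v)) ^ 2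

/-- The empirical weight `Ŵ_u = ∑_v θ̂_{uv}²` (in direct form). -/
noncomputable def WuHat {d n : ℕ} (k : ℕ) (h : k ≤ d) (xs : Fin n → Cube d) (u : Cube k) : ℝ :=
  ∑ v : Cube (d - k), (thetaHat xs (concat h u v)) ^ 2

/-- The recursive Walsh thresholding estimator
`f̂_RWT = ∑_{s ∈ A(λ)} θ̂_s χ_s`, where
`A(λ) = {s : Ŵ_{π_k(s)} ≥ λ_k for all 1 ≤ k ≤ d}`. -/
noncomputable def fRWT {d n : ℕ} (lam : ℕ → ℝ) (xs : Fin n → Cube d) : Cube d → ℝ :=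
  fun x => ∑ s : Cube d,
    Set.indicator
      {s' : Cube d | ∀ k, ∀ hk : k ≤ d, 1 ≤ k → lam k ≤ What k hk xs (pref k hk s')}
      (fun s' => thetaHat xs s') s * walsh s x

/-- Expectation over an i.i.d. sample `X_1, …, X_n` drawn from the density `f`:
`E_f[g(X₁,…,Xₙ)] = ∑_{x₁,…,xₙ} (∏_i f(xᵢ)) g(x₁,…,xₙ)`. -/
noncomputable def expSample {d n : ℕ} (f : Cube d → ℝ) (g : (Fin n → Cube d) → ℝ) : ℝ :=
  ∑ xs : Fin n → Cube d, (∏ i, f (xs i)) * g xs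

/-- The packing family `F(k,a)`: densities whose Walsh coefficient at the lexicographically
first string `s₁ = (0,…,0)` equals `1/√M`, and whose remaining `M-1` coefficients have exactly
`k` nonzero entries, each equal to `a` or `-a`. -/
def Fka (d k : ℕ) (a : ℝ) : Set (Cube d → ℝ) :=
  {f | theta f (fun _ => false) = 1 / Real.sqrt (2 ^ d) ∧
       (∀ s : Cube d, s ≠ (fun _ => false) →
          theta f s = 0 ∨ theta f s = a ∨ theta f s = -a) ∧
       {s : Cube d | s ≠ (fun _ => false) ∧ theta f s ≠ 0}.ncard = k}

/-!
By Walsh inversion `f = θ₀ χ₀ + ∑_{s ≠ 0} θ_s χ_s` with `θ₀ χ₀ = 1/M` and `|χ_s| = 1/√M`, so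
`|f x - 1/M| ≤ k a / √M ≤ 1/(2M)`. Sorted by size, the coefficients are `1/√M`, then `k` values
of size `a`, then zeros; the weak-`ℓ^p` bound follows because the `m`-th largest value (from `0`)
is at most `b` as soon as at most `m` values exceed `b`.
-/

open Finset

section Walsh

variable {d : ℕ}

lemma neg_one_pow_dotc (s x : Cube d) :
    (-1 : ℝ) ^ dotc s x = ∏ j, if s j = true ∧ x j = true then -1 else 1 := by
  rw [prod_ite, prod_const, prod_const_one, mul_one, dotc]

lemma sum_neg_one_pow_dotc_mul (x y : Cube d) :
    ∑ s : Cube d, (-1 : ℝ) ^ dotc s x * (-1) ^ dotc s y = if x = y then 2 ^ d else 0 := by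
  have hcoord : ∀ j, ∑ b : Bool, (if b = true ∧ x j = true then (-1 : ℝ) else 1) *
      (if b = true ∧ y j = true then -1 else 1) = if x j = y j then 2 else 0 := by
    intro j
    cases x j <;> cases y j <;> norm_num
  simp_rw [neg_one_pow_dotc, ← prod_mul_distrib]
  rw [← Fintype.prod_sum (fun j b => (if b = true ∧ x j = true then (-1 : ℝ) else 1) *
      (if b = true ∧ y j = true then -1 else 1))]
  simp_rw [hcoord, Fintype.prod_ite_zero, funext_iff, prod_const, card_univ, Fintype.card_fin]

lemma sum_walsh_mul_walsh (x y : Cube d) :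
    ∑ s : Cube d, walsh s x * walsh s y = if x = y then 1 else 0 := by
  have hsq : √(2 ^ d) * √(2 ^ d) = (2 : ℝ) ^ d := Real.mul_self_sqrt (by positivity)
  simp_rw [walsh, div_mul_div_comm, hsq, ← sum_div, sum_neg_one_pow_dotc_mul]
  split_ifs <;> simp

lemma eq_sum_theta_mul_walsh (f : Cube d → ℝ) (x : Cube d) :
    f x = ∑ s, theta f s * walsh s x := by
  simp_rw [theta, ip, sum_mul, mul_assoc]
  rw [sum_comm]
  simp_rw [← mul_sum, sum_walsh_mul_walsh]
  simp

lemma walsh_zero_left (x : Cube d) : walsh (fun _ => false) x = 1 / √(2 ^ d) := by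
  simp [walsh, dotc]

lemma abs_walsh (s x : Cube d) : |walsh s x| = 1 / √(2 ^ d) := by
  rw [walsh, abs_div, abs_pow, abs_neg, abs_one, one_pow, abs_of_nonneg (Real.sqrt_nonneg _)]

lemma theta_zero_left (f : Cube d → ℝ) :
    theta f (fun _ => false) = (∑ x, f x) / √(2 ^ d) := by
  simp_rw [theta, ip, walsh_zero_left, ← sum_mul, mul_one_div]

lemma abs_sub_theta_zero_left_le (f : Cube d → ℝ) (x : Cube d) :
    |f x - theta f (fun _ => false) / √(2 ^ d)| ≤
      (∑ s ∈ univ.erase (fun _ => false), |theta f s|) / √(2 ^ d) := by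
  rw [eq_sum_theta_mul_walsh f x, ← add_sum_erase _ _ (mem_univ (fun _ => false)),
    walsh_zero_left, mul_one_div, add_sub_cancel_left, sum_div]
  refine (abs_sum_le_sum_abs _ _).trans_eq (sum_congr rfl fun s _ => ?_)
  rw [abs_mul, abs_walsh, mul_one_div]

end Walsh

section WeakLp

lemma exists_equiv_fin_antitone {α : Type*} [Fintype α] {n : ℕ} (hn : Fintype.card α = n)
    (g : α → ℝ) : ∃ e : Fin n ≃ α, Antitone (g ∘ e) := by
  let ε : Fin n ≃ α := (Fintype.equivFinOfCardEq hn).symm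
  refine ⟨(Tuple.sort (fun i => -g (ε i))).trans ε, fun i j hij => ?_⟩
  simpa using Tuple.monotone_sort (fun i => -g (ε i)) hij

lemma apply_le_of_card_lt_le {α : Type*} [Fintype α] {n : ℕ} {g : α → ℝ} {e : Fin n ≃ α}
    (he : Antitone (g ∘ e)) (m : Fin n) {b : ℝ} (hcard : #{x | b < g x} ≤ m) :
    g (e m) ≤ b := by
  by_contra! hlt
  have hsub : (Iic m).map e.toEmbedding ⊆ ({x | b < g x} : Finset α) := by
    intro x hx
    obtain ⟨i, hi, rfl⟩ := mem_map.mp hx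
    exact mem_filter.mpr ⟨mem_univ _, hlt.trans_le (he (mem_Iic.mp hi))⟩
  have := card_le_card hsub
  rw [card_map, Fin.card_Iic] at this
  omega

lemma wlp_of_card_lt_abs_le {d : ℕ} {p R : ℝ} {θ : Cube d → ℝ}
    (h : ∀ m : Fin (2 ^ d), #{s | R * ((m : ℝ) + 1) ^ (-(1 / p)) < |θ s|} ≤ m) :
    wlp d p R θ := by
  obtain ⟨e, he⟩ := exists_equiv_fin_antitone (n := 2 ^ d) (by simp) fun s => |θ s|
  exact ⟨e, fun i j hij => he hij, fun m => apply_le_of_card_lt_le he m (h m)⟩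

end WeakLp

section Fka

variable {d k : ℕ} {a : ℝ} {f : Cube d → ℝ}

lemma abs_theta_le_of_mem_Fka (hf : f ∈ Fka d k a) {s : Cube d} (hs : s ≠ fun _ => false) :
    |theta f s| ≤ |a| := by
  rcases hf.2.1 s hs with h | h | h <;> simp [h]

lemma card_filter_theta_ne_zero_of_mem_Fka (hf : f ∈ Fka d k a) :
    #{s ∈ univ.erase (fun _ => false) | theta f s ≠ 0} = k := by
  rw [← hf.2.2, ← Set.ncard_coe_finset]
  congr 1
  ext s
  simp

lemma card_theta_ne_zero_le_of_mem_Fka (hf : f ∈ Fka d k a) :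
    #{s : Cube d | theta f s ≠ 0} ≤ k + 1 := by
  calc #{s : Cube d | theta f s ≠ 0}
      ≤ #(insert (fun _ => false : Cube d)
          {s ∈ univ.erase (fun _ => false : Cube d) | theta f s ≠ 0}) := by
        refine card_le_card fun s hs => ?_
        by_cases h : s = fun _ => false <;> simp_all
    _ ≤ k + 1 := by
        rw [← card_filter_theta_ne_zero_of_mem_Fka hf]
        exact card_insert_le _ _

lemma sum_abs_theta_erase_zero_of_mem_Fka (hf : f ∈ Fka d k a) :
    ∑ s ∈ univ.erase (fun _ => false), |theta f s| = k * |a| := by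
  rw [← sum_filter_of_ne fun s _ h => abs_ne_zero.mp h,
    ← card_filter_theta_ne_zero_of_mem_Fka hf, ← nsmul_eq_mul, ← sum_const]
  refine sum_congr rfl fun s hs => ?_
  obtain ⟨hs, hne⟩ := mem_filter.mp hs
  rcases hf.2.1 s (ne_of_mem_erase hs) with h | h | h
  · exact absurd h hne
  all_goals simp [h]

lemma sum_eq_one_of_mem_Fka (hf : f ∈ Fka d k a) : ∑ x, f x = 1 := by
  have h := hf.1
  rwa [theta_zero_left, div_left_inj' (by positivity)] at h

lemma abs_sub_le_of_mem_Fka (hf : f ∈ Fka d k a) (x : Cube d) :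
    |f x - 1 / 2 ^ d| ≤ k * |a| / √(2 ^ d) := by
  have h := abs_sub_theta_zero_left_le f x
  rwa [hf.1, sum_abs_theta_erase_zero_of_mem_Fka hf, div_div,
    Real.mul_self_sqrt (by positivity)] at h

lemma mem_Fclass_of_mem_Fka {p : ℝ} (hf : f ∈ Fka d k a) (hp : 0 < p)
    (ha : |a| ≤ 1 / √(2 ^ d) * ((k : ℝ) + 1) ^ (-(1 / p))) : f ∈ Fclass d p := by
  have hexp : -(1 / p) ≤ 0 := neg_nonpos.mpr (by positivity)
  have ha_le : |a| ≤ 1 / √(2 ^ d) :=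
    ha.trans (mul_le_of_le_one_right (by positivity)
      (Real.rpow_le_one_of_one_le_of_nonpos (by simp) hexp))
  have hle : ∀ s, |theta f s| ≤ 1 / √(2 ^ d) := by
    intro s
    by_cases hs : s = fun _ => false
    · rw [hs, hf.1, abs_of_pos (by positivity)]
    · exact (abs_theta_le_of_mem_Fka hf hs).trans ha_le
  refine wlp_of_card_lt_abs_le fun m => ?_
  obtain hm | hm := Nat.eq_zero_or_pos m
  · simp only [hm, CharP.cast_eq_zero, zero_add, Real.one_rpow, mul_one, nonpos_iff_eq_zero,
      card_eq_zero, filter_eq_empty_iff, not_lt]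
    exact fun s _ => hle s
  obtain hmk | hkm := le_or_gt (m : ℕ) k
  · refine (card_le_card (t := {fun _ => false}) fun s hs => ?_).trans
      (by rw [card_singleton]; exact hm)
    by_contra hs'
    have hlt := (mem_filter.mp hs).2
    refine (abs_theta_le_of_mem_Fka hf (by simpa using hs')).not_gt (lt_of_le_of_lt ?_ hlt)
    refine ha.trans (mul_le_mul_of_nonneg_left ?_ (by positivity))
    exact Real.rpow_le_rpow_of_nonpos (by positivity) (by exact_mod_cast Nat.succ_le_succ hmk) hexp
  · refine (card_le_card fun s hs => ?_).trans ((card_theta_ne_zero_le_of_mem_Fka hf).trans hkm)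
    have hlt := (mem_filter.mp hs).2
    simp only [mem_filter, mem_univ, true_and]
    exact abs_pos.mp (lt_of_le_of_lt (by positivity) hlt)

end Fka

theorem Fka_subset_class_general (d : ℕ) (p : ℝ) (hp0 : 0 < p)
    (k : ℕ) (a : ℝ) (ha : 0 < a)
    (h1 : (k : ℝ) * a ≤ 1 / (2 * Real.sqrt (2 ^ d)))
    (h2 : a ≤ (1 / Real.sqrt (2 ^ d)) * ((k : ℝ) + 1) ^ (-(1 / p))) :
    ∀ f ∈ Fka d k a,
      (∀ x : Cube d, 1 / (2 * (2 : ℝ) ^ d) ≤ f x ∧ f x ≤ 3 / (2 * (2 : ℝ) ^ d)) ∧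
      f ∈ FclassDens d p := by
  intro f hf
  have hdev (x : Cube d) : |f x - 1 / 2 ^ d| ≤ 1 / (2 * 2 ^ d) :=
    calc |f x - 1 / 2 ^ d| ≤ k * a / √(2 ^ d) := by
          simpa [abs_of_pos ha] using abs_sub_le_of_mem_Fka hf x
      _ ≤ 1 / (2 * √(2 ^ d)) / √(2 ^ d) := by gcongr
      _ = 1 / (2 * 2 ^ d) := by rw [div_div, mul_assoc, Real.mul_self_sqrt (by positivity)]
  have hbounds (x : Cube d) : 1 / (2 * (2 : ℝ) ^ d) ≤ f x ∧ f x ≤ 3 / (2 * (2 : ℝ) ^ d) := by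
    have hone : (1 : ℝ) / 2 ^ d = 2 * (1 / (2 * 2 ^ d)) := by field_simp
    have hthree : (3 : ℝ) / (2 * 2 ^ d) = 3 * (1 / (2 * 2 ^ d)) := by ring
    obtain ⟨hlo, hhi⟩ := abs_le.mp (hdev x)
    constructor <;> linarith
  refine ⟨hbounds, mem_Fclass_of_mem_Fka hf hp0 (by rwa [abs_of_pos ha]),
    fun x => le_trans (by positivity) (hbounds x).1, sum_eq_one_of_mem_Fka hf⟩

/-- **Lemma 3, item 1.** Let `0 < p ≤ 1`, `M = 2^d`, `k ∈ {1,…,M-1}` and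
`a > 0` satisfy `ka ≤ 1/(2√M)` and `a ≤ M^{-1/2}(k+1)^{-1/p}`. Then every `f ∈ F(k,a)`
satisfies `1/(2M) ≤ f(x) ≤ 3/(2M)` for all `x`, and `F(k,a) ⊆ F^{+,1}_d(p)`. -/
theorem Fka_subset_class (d : ℕ) (hd : 1 ≤ d) (p : ℝ) (hp0 : 0 < p) (hp1 : p ≤ 1)
    (k : ℕ) (hk1 : 1 ≤ k) (hkM : k ≤ 2 ^ d - 1) (a : ℝ) (ha : 0 < a)
    (h1 : (k : ℝ) * a ≤ 1 / (2 * Real.sqrt (2 ^ d)))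
    (h2 : a ≤ (1 / Real.sqrt (2 ^ d)) * ((k : ℝ) + 1) ^ (-(1 / p))) :
    ∀ f ∈ Fka d k a,
      (∀ x : Cube d, 1 / (2 * (2 : ℝ) ^ d) ≤ f x ∧ f x ≤ 3 / (2 * (2 : ℝ) ^ d)) ∧
      f ∈ FclassDens d p :=
  Fka_subset_class_general d p hp0 k a ha h1 h2

end RWT
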